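/- Let (B, p⊥, τ) be a static anisotropic (CGL) plasma equilibrium on ℝ³, let p := p⊥ + τ|B|²/2 be the mean pressure, and let f : ℝ² → ℝ be any smooth function. Then div( f(p, τ) B ) = 0 everywhere on ℝ³. (This conservation of magnetic flux reflects the facts that B · grad p = 0 and B · grad τ = 0, i.e. p and τ are constant on magnetic surfaces.) -/

import Mathlib

/-!
Dotting the momentum equation with `B` kills the force term, since `(curl B × B) · B = 0`, and
with `B · ∇τ = 0` it leaves `B · ∇p⊥ + τ B · ∇(|B|²/2) = 0`, which is `B · ∇p = 0`.
By the chain rule `B · ∇f(p, τ) = Df(p, τ) (B · ∇p, B · ∇τ) = 0`, and so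
`div (f(p, τ) B) = B · ∇f(p, τ) + f(p, τ) div B = 0`.
-/

open Matrix

noncomputable section

abbrev R3 : Type := Fin 3 → ℝ

/-- Partial derivative in the `i`-th coordinate direction. -/
def pd (i : Fin 3) (f : R3 → ℝ) (x : R3) : ℝ := fderiv ℝ f x (Pi.single i 1)

/-- Gradient of a scalar field on ℝ³. -/
def grad3 (f : R3 → ℝ) (x : R3) : R3 := fun i => pd i f x

/-- Divergence of a vector field on ℝ³. -/
def div3 (B : R3 → R3) (x : R3) : ℝ := ∑ i, pd i (fun y => B y i) x

/-- Curl of a vector field on ℝ³. -/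
def curl3 (B : R3 → R3) (x : R3) : R3 :=
  ![pd 1 (fun y => B y 2) x - pd 2 (fun y => B y 1) x,
    pd 2 (fun y => B y 0) x - pd 0 (fun y => B y 2) x,
    pd 0 (fun y => B y 1) x - pd 1 (fun y => B y 0) x]

theorem dotProduct_grad3 (g : R3 → ℝ) (v x : R3) : v ⬝ᵥ grad3 g x = fderiv ℝ g x v := by
  conv_rhs => rw [← Finset.univ_sum_single v]
  simp only [dotProduct, grad3, pd, map_sum]
  refine Finset.sum_congr rfl fun i _ => ?_
  rw [← smul_eq_mul, ← map_smul, ← Pi.single_smul', smul_eq_mul, mul_one]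

theorem div3_smul {g : R3 → ℝ} {B : R3 → R3} {x : R3} (hg : DifferentiableAt ℝ g x)
    (hB : DifferentiableAt ℝ B x) :
    div3 (fun y => g y • B y) x = B x ⬝ᵥ grad3 g x + g x * div3 B x := by
  simp only [div3, Pi.smul_apply, smul_eq_mul, pd, fderiv_fun_mul hg (differentiableAt_pi.1 hB _)]
  simp [dotProduct, grad3, pd, Finset.mul_sum, Finset.sum_add_distrib, add_comm]

theorem dotProduct_grad3_comp_prodMk {f : ℝ × ℝ → ℝ} {a b : R3 → ℝ} {x : R3}
    (hf : DifferentiableAt ℝ f (a x, b x)) (ha : DifferentiableAt ℝ a x)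
    (hb : DifferentiableAt ℝ b x) (v : R3) :
    v ⬝ᵥ grad3 (fun y => f (a y, b y)) x =
      fderiv ℝ f (a x, b x) (v ⬝ᵥ grad3 a x, v ⬝ᵥ grad3 b x) := by
  simp only [dotProduct_grad3]
  rw [fderiv_fun_comp x hf (ha.prodMk hb), DifferentiableAt.fderiv_prodMk ha hb]
  rfl

theorem DifferentiableAt.dotProduct {𝕜 E ι : Type*} [NontriviallyNormedField 𝕜]
    [NormedAddCommGroup E] [NormedSpace 𝕜 E] [Fintype ι] {u v : E → ι → 𝕜} {x : E}
    (hu : DifferentiableAt 𝕜 u x) (hv : DifferentiableAt 𝕜 v x) :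
    DifferentiableAt 𝕜 (fun y => u y ⬝ᵥ v y) x := by
  have hui := differentiableAt_pi.1 hu
  have hvi := differentiableAt_pi.1 hv
  simp only [_root_.dotProduct]
  fun_prop

def meanPressure (B : R3 → R3) (pperp τ : R3 → ℝ) (x : R3) : ℝ :=
  pperp x + τ x * (B x ⬝ᵥ B x) / 2

theorem dotProduct_grad3_meanPressure_eq_zero {B : R3 → R3} {pperp τ : R3 → ℝ} {x : R3}
    (hB : DifferentiableAt ℝ B x) (hpperp : DifferentiableAt ℝ pperp x)
    (hτ : DifferentiableAt ℝ τ x)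
    (hmom : (1 - τ x) • crossProduct (curl3 B x) (B x) =
      grad3 pperp x + τ x • grad3 (fun y => (B y ⬝ᵥ B y) / 2) x + (B x ⬝ᵥ grad3 τ x) • B x)
    (hstate : B x ⬝ᵥ grad3 τ x = 0) :
    B x ⬝ᵥ grad3 (meanPressure B pperp τ) x = 0 := by
  set q : R3 → ℝ := fun y => (B y ⬝ᵥ B y) / 2
  have hq : DifferentiableAt ℝ q x := by
    have := hB.dotProduct hB
    fun_prop
  have balance : B x ⬝ᵥ grad3 pperp x + τ x * (B x ⬝ᵥ grad3 q x) = 0 := by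
    simpa [dotProduct_add, dotProduct_smul, dot_cross_self, hstate] using
      (congrArg (B x ⬝ᵥ ·) hmom).symm
  have hp : meanPressure B pperp τ = fun y => pperp y + τ y * q y := by
    funext y; simp only [meanPressure, q]; ring
  simp only [dotProduct_grad3] at balance hstate ⊢
  rw [hp, fderiv_fun_add hpperp (hτ.fun_mul hq), fderiv_fun_mul hτ hq]
  simp only [_root_.add_apply, _root_.smul_apply, smul_eq_mul]
  linear_combination balance + q x * hstate

/-- Conservation of magnetic flux for static anisotropic (CGL) equilibria:
`div(f(p, τ) B) = 0` for any smooth `f : ℝ² → ℝ`, where `p = p⊥ + τ|B|²/2`. -/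
theorem cgl_magnetic_flux_conservation
    (B : R3 → R3) (pperp τ : R3 → ℝ)
    (hB : ContDiff ℝ (⊤ : ℕ∞) B) (hpperp : ContDiff ℝ (⊤ : ℕ∞) pperp)
    (hτ : ContDiff ℝ (⊤ : ℕ∞) τ)
    (hmom : ∀ x, (1 - τ x) • crossProduct (curl3 B x) (B x) =
      grad3 pperp x + τ x • grad3 (fun y => (B y ⬝ᵥ B y) / 2) x + (B x ⬝ᵥ grad3 τ x) • B x)
    (hdiv : ∀ x, div3 B x = 0)
    (hstate : ∀ x, B x ⬝ᵥ grad3 τ x = 0)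
    (p : R3 → ℝ) (hp : p = fun x => pperp x + τ x * (B x ⬝ᵥ B x) / 2)
    (f : ℝ × ℝ → ℝ) (hf : ContDiff ℝ (⊤ : ℕ∞) f) :
    ∀ x, div3 (fun y => f (p y, τ y) • B y) x = 0 := by
  obtain rfl : p = meanPressure B pperp τ := hp
  intro x
  have hBx : DifferentiableAt ℝ B x := hB.differentiable (by simp) x
  have hpperpx : DifferentiableAt ℝ pperp x := hpperp.differentiable (by simp) x
  have hτx : DifferentiableAt ℝ τ x := hτ.differentiable (by simp) x
  have hpx : DifferentiableAt ℝ (meanPressure B pperp τ) x := by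
    have := hBx.dotProduct hBx
    unfold meanPressure
    fun_prop
  have hfx : DifferentiableAt ℝ f (meanPressure B pperp τ x, τ x) := hf.differentiable (by simp) _
  have hgx : DifferentiableAt ℝ (fun y => f (meanPressure B pperp τ y, τ y)) x :=
    hfx.comp x (hpx.prodMk hτx)
  rw [div3_smul hgx hBx, hdiv x, mul_zero, add_zero,
    dotProduct_grad3_comp_prodMk hfx hpx hτx,
    dotProduct_grad3_meanPressure_eq_zero hBx hpperpx hτx (hmom x) (hstate x), hstate x,
    Prod.mk_zero_zero, map_zero]
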